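/- The expected (over a perturbation distribution on Δθ) KL divergence between the model's prediction at θ* and at θ*+Δθ, under the linearized model, is at most (∑_c p(c)·‖g(c)‖)·E[‖Δθ‖]. This is Proposition 4 of the paper: the expected-gradient-norm uncertainty upper-bounds the perturbation-based uncertainty for small perturbations. -/
import Mathlib


open Finset Real MeasureTheory
open scoped RealInnerProductSpace BigOperators

theorem stmt2 {C d : ℕ} {Ω : Type*} [MeasurableSpace Ω]
    (μ : Measure Ω) [IsProbabilityMeasure μ]
    (Δθ : Ω → EuclideanSpace ℝ (Fin d))
    (hΔθ : Integrable (fun ω => ‖Δθ ω‖) μ)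
    (p : Fin C → ℝ) (hp : ∀ c, 0 < p c)
    (g : Fin C → EuclideanSpace ℝ (Fin d))
    (q : Ω → Fin C → ℝ) (hq : ∀ ω c, 0 < q ω c)
    (hlin : ∀ ω c, Real.log (q ω c) = Real.log (p c) + ⟪g c, Δθ ω⟫)
    (hint : Integrable (fun ω => ∑ c, p c * Real.log (p c / q ω c)) μ) :
    ∫ ω, (∑ c, p c * Real.log (p c / q ω c)) ∂μ ≤
      (∑ c, p c * ‖g c‖) * ∫ ω, ‖Δθ ω‖ ∂μ := by
  have key : ∀ ω, (∑ c, p c * Real.log (p c / q ω c)) ≤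
      (∑ c, p c * ‖g c‖) * ‖Δθ ω‖ := by
    intro ω
    rw [Finset.sum_mul]
    apply Finset.sum_le_sum
    intro c _
    have hlog : Real.log (p c / q ω c) = -⟪g c, Δθ ω⟫ := by
      rw [Real.log_div (hp c).ne' (hq ω c).ne', hlin ω c]; ring
    rw [hlog, mul_assoc]
    apply mul_le_mul_of_nonneg_left _ (hp c).le
    calc -⟪g c, Δθ ω⟫ ≤ |⟪g c, Δθ ω⟫| := neg_le_abs _
      _ ≤ ‖g c‖ * ‖Δθ ω‖ := abs_real_inner_le_norm _ _
  calc ∫ ω, (∑ c, p c * Real.log (p c / q ω c)) ∂μ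
      ≤ ∫ ω, (∑ c, p c * ‖g c‖) * ‖Δθ ω‖ ∂μ :=
        integral_mono hint (hΔθ.const_mul _) key
    _ = (∑ c, p c * ‖g c‖) * ∫ ω, ‖Δθ ω‖ ∂μ := MeasureTheory.integral_const_mul _ _
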